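/- For any word w ∈ {0,1}*, if M_w = [[a,b],[c,d]], then the Calkin–Wilf value at w is (a+b)/(c+d) and the Stern–Brocot value at w is (b+d)/(a+c); consequently the Stern–Brocot value at w equals the reciprocal of the Calkin–Wilf value at the word w' whose matrix is M_wᵀ. -/

import Mathlib

open Matrix

def SL2N (M : Matrix (Fin 2) (Fin 2) ℤ) : Prop :=
  (∀ i j, 0 ≤ M i j) ∧ M.det = 1

def Lmat : Matrix (Fin 2) (Fin 2) ℤ := !![1, 0; 1, 1]

def Rmat : Matrix (Fin 2) (Fin 2) ℤ := !![1, 1; 0, 1]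

def matOf (w : List Bool) : Matrix (Fin 2) (Fin 2) ℤ :=
  w.foldl (fun acc b => (if b then Rmat else Lmat) * acc) 1

def cwFrom (x : ℚ) : List Bool → ℚ
  | [] => x
  | b :: w => cwFrom (if b then 1 + x else x / (1 + x)) w

def cwVal (M : Matrix (Fin 2) (Fin 2) ℤ) : ℚ :=
  ((M 0 0 + M 0 1 : ℤ) : ℚ) / ((M 1 0 + M 1 1 : ℤ) : ℚ)

def sbMatVal (M : Matrix (Fin 2) (Fin 2) ℤ) : ℚ :=
  ((M 0 1 + M 1 1 : ℤ) : ℚ) / ((M 0 0 + M 1 0 : ℤ) : ℚ)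

def sbStep (pr : (ℤ × ℤ) × (ℤ × ℤ)) (b : Bool) : (ℤ × ℤ) × (ℤ × ℤ) :=
  let m := (pr.1.1 + pr.2.1, pr.1.2 + pr.2.2)
  if b then (m, pr.2) else (pr.1, m)

def sbBounds (w : List Bool) : (ℤ × ℤ) × (ℤ × ℤ) :=
  w.foldl sbStep ((0, 1), (1, 0))

def sbVal (w : List Bool) : ℚ :=
  (((sbBounds w).1.1 + (sbBounds w).2.1 : ℤ) : ℚ) /
    (((sbBounds w).1.2 + (sbBounds w).2.2 : ℤ) : ℚ)

-- auxiliary machinery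

def mstep (acc : Matrix (Fin 2) (Fin 2) ℤ) (b : Bool) : Matrix (Fin 2) (Fin 2) ℤ :=
  (if b then Rmat else Lmat) * acc

lemma foldl_mstep (w : List Bool) (M : Matrix (Fin 2) (Fin 2) ℤ) :
    w.foldl mstep M = matOf w * M := by
  induction w generalizing M with
  | nil => simp [matOf]
  | cons b w ih =>
    show w.foldl mstep (mstep M b) = matOf (b :: w) * M
    rw [ih]
    have h : matOf (b :: w) = matOf w * mstep 1 b := by
      show (b :: w).foldl mstep 1 = _
      rw [List.foldl_cons, ih]
    rw [h]
    simp [mstep, Matrix.mul_assoc]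

lemma matOf_cons (b : Bool) (w : List Bool) :
    matOf (b :: w) = matOf w * (if b then Rmat else Lmat) := by
  show (b :: w).foldl mstep 1 = _
  rw [List.foldl_cons, foldl_mstep]
  simp [mstep]

lemma matOf_append_singleton (w : List Bool) (b : Bool) :
    matOf (w ++ [b]) = (if b then Rmat else Lmat) * matOf w := by
  show (w ++ [b]).foldl mstep 1 = _
  rw [List.foldl_append, List.foldl_cons, List.foldl_nil]
  rfl

lemma mul_entries (b : Bool) (M : Matrix (Fin 2) (Fin 2) ℤ) :
    (if b then Rmat else Lmat) * M =
      if b then !![M 0 0 + M 1 0, M 0 1 + M 1 1; M 1 0, M 1 1]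
      else !![M 0 0, M 0 1; M 0 0 + M 1 0, M 0 1 + M 1 1] := by
  rw [Matrix.eta_fin_two M]
  cases b <;> simp [Rmat, Lmat] <;> ext i j <;> fin_cases i <;> fin_cases j <;>
    simp [Matrix.mul_apply, Fin.sum_univ_two]

def Good (M : Matrix (Fin 2) (Fin 2) ℤ) : Prop :=
  (∀ i j, 0 ≤ M i j) ∧ 0 < M 1 0 + M 1 1

lemma good_mul (b : Bool) (M : Matrix (Fin 2) (Fin 2) ℤ) (h : Good M) :
    Good ((if b then Rmat else Lmat) * M) := by
  obtain ⟨h1, h2⟩ := h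
  have a00 := h1 0 0; have a01 := h1 0 1; have a10 := h1 1 0; have a11 := h1 1 1
  rw [mul_entries]
  cases b <;>
  · refine ⟨fun i j => ?_, ?_⟩
    · fin_cases i <;> fin_cases j <;> simp <;> omega
    · simp; omega

lemma cwVal_mul (b : Bool) (M : Matrix (Fin 2) (Fin 2) ℤ) (h : Good M) :
    cwVal ((if b then Rmat else Lmat) * M) =
      (if b then 1 + cwVal M else cwVal M / (1 + cwVal M)) := by
  obtain ⟨h1, h2⟩ := h
  have a00 := h1 0 0; have a01 := h1 0 1
  set a := ((M 0 0 : ℤ) : ℚ)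
  set bq := ((M 0 1 : ℤ) : ℚ)
  set c := ((M 1 0 : ℤ) : ℚ)
  set d := ((M 1 1 : ℤ) : ℚ)
  have hcd : (0:ℚ) < c + d := by
    have : ((0:ℤ):ℚ) < ((M 1 0 + M 1 1 : ℤ) : ℚ) := by exact_mod_cast h2
    push_cast at this; simpa using this
  have hab : (0:ℚ) ≤ a + bq := by
    have : ((0:ℤ):ℚ) ≤ ((M 0 0 + M 0 1 : ℤ) : ℚ) := by exact_mod_cast add_nonneg a00 a01
    push_cast at this; simpa using this
  have habcd : (0:ℚ) < a + bq + (c + d) := by linarith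
  rw [mul_entries]
  have e1 : (!![M 0 0, M 0 1; M 0 0 + M 1 0, M 0 1 + M 1 1] : Matrix (Fin 2) (Fin 2) ℤ) 0 0 = M 0 0 := rfl
  cases b
  · show cwVal !![M 0 0, M 0 1; M 0 0 + M 1 0, M 0 1 + M 1 1] = _
    simp only [cwVal, if_false, Bool.false_eq_true]
    norm_num [Matrix.cons_val_zero, Matrix.cons_val_one, Matrix.head_cons, Matrix.head_fin_const]
    push_cast
    rw [div_eq_div_iff (by linarith) (by positivity)]
    have hne : ((M 1 0 : ℤ) : ℚ) + ((M 1 1 : ℤ) : ℚ) ≠ 0 := ne_of_gt hcd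
    field_simp
    ring_nf
    try exact Or.inl trivial
  · show cwVal !![M 0 0 + M 1 0, M 0 1 + M 1 1; M 1 0, M 1 1] = _
    simp only [cwVal, if_true]
    norm_num [Matrix.cons_val_zero, Matrix.cons_val_one, Matrix.head_cons, Matrix.head_fin_const]
    push_cast
    have hne : ((M 1 0 : ℤ) : ℚ) + ((M 1 1 : ℤ) : ℚ) ≠ 0 := ne_of_gt hcd
    field_simp
    ring

lemma cw_key (w : List Bool) (M : Matrix (Fin 2) (Fin 2) ℤ) (h : Good M) :
    Good (matOf w * M) ∧ cwFrom (cwVal M) w = cwVal (matOf w * M) := by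
  induction w generalizing M with
  | nil => simpa [matOf, cwFrom] using h
  | cons b w ih =>
    have hg : Good ((if b then Rmat else Lmat) * M) := good_mul b M h
    obtain ⟨g1, g2⟩ := ih _ hg
    rw [matOf_cons, Matrix.mul_assoc] at *
    refine ⟨g1, ?_⟩
    show cwFrom (if b then 1 + cwVal M else cwVal M / (1 + cwVal M)) w = _
    rw [← cwVal_mul b M h]
    exact g2

lemma good_one : Good (1 : Matrix (Fin 2) (Fin 2) ℤ) := by
  constructor
  · intro i j; fin_cases i <;> fin_cases j <;> simp [Matrix.one_apply]
  · simp [Matrix.one_apply]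

lemma cw_matOf (w : List Bool) : cwFrom 1 w = cwVal (matOf w) := by
  have h := (cw_key w 1 good_one).2
  rw [mul_one] at h
  have : cwVal 1 = 1 := by simp [cwVal, Matrix.one_apply]
  rwa [this] at h

lemma sb_key (w : List Bool) (M : Matrix (Fin 2) (Fin 2) ℤ) :
    w.foldl sbStep ((M 0 1, M 0 0), (M 1 1, M 1 0)) =
      (((matOf w * M) 0 1, (matOf w * M) 0 0), ((matOf w * M) 1 1, (matOf w * M) 1 0)) := by
  induction w generalizing M with
  | nil => simp [matOf]
  | cons b w ih =>
    rw [List.foldl_cons, matOf_cons, Matrix.mul_assoc]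
    have hstep : sbStep ((M 0 1, M 0 0), (M 1 1, M 1 0)) b =
        ((((if b then Rmat else Lmat) * M) 0 1, ((if b then Rmat else Lmat) * M) 0 0),
         (((if b then Rmat else Lmat) * M) 1 1, ((if b then Rmat else Lmat) * M) 1 0)) := by
      rw [mul_entries]
      cases b <;> simp [sbStep]
    rw [hstep, ih]

lemma sb_matVal (w : List Bool) : sbVal w = sbMatVal (matOf w) := by
  have h := sb_key w 1
  rw [mul_one] at h
  simp only [sbVal, sbBounds]
  have h0 : (((0,1),(1,0)) : (ℤ×ℤ)×(ℤ×ℤ)) =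
      (((1 : Matrix (Fin 2) (Fin 2) ℤ) 0 1, (1 : Matrix (Fin 2) (Fin 2) ℤ) 0 0),
       ((1 : Matrix (Fin 2) (Fin 2) ℤ) 1 1, (1 : Matrix (Fin 2) (Fin 2) ℤ) 1 0)) := by
    simp [Matrix.one_apply]
  rw [h0, h]
  simp [sbMatVal]

lemma matOf_transpose (w : List Bool) :
    matOf ((w.map not).reverse) = (matOf w)ᵀ := by
  induction w with
  | nil => simp [matOf, Matrix.transpose_one]
  | cons b w ih =>
    have : ((b :: w).map not).reverse = (w.map not).reverse ++ [!b] := by simp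
    rw [this, matOf_append_singleton, ih, matOf_cons, Matrix.transpose_mul]
    congr 1
    cases b <;> simp [Rmat, Lmat] <;> ext i j <;> fin_cases i <;> fin_cases j <;> rfl

theorem stmt15 (w : List Bool) :
    cwFrom 1 w = cwVal (matOf w) ∧
    sbVal w = sbMatVal (matOf w) ∧
    ∃ w' : List Bool, matOf w' = (matOf w)ᵀ ∧ sbVal w = (cwFrom 1 w')⁻¹ := by
  refine ⟨cw_matOf w, sb_matVal w, (w.map not).reverse, matOf_transpose w, ?_⟩
  rw [cw_matOf, matOf_transpose, sb_matVal]
  simp only [cwVal, sbMatVal, Matrix.transpose_apply]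
  rw [inv_div]
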